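/- Let T ⊂ ℝ^d be a convex set containing the origin and let ξ be a random vector in ℝ^d. Define ω(r) = E[sup_{x ∈ T ∩ rB₂} ⟨ξ, x⟩]. The following are equivalent: (i) for every σ > 0 the maximizer r(σ) of r ↦ ω(r) − r²/(2σ) over r ≥ 0 exists and is unique; (ii) there exists r₀ > 0 with ω(r₀) ∈ [0, ∞); (iii) for every r > 0, ω(r) ∈ [0, ∞). -/

import Mathlib

open MeasureTheory Metric Set
open scoped ENNReal NNReal

noncomputable section

namespace Stmt0

variable {E : Type*} [NormedAddCommGroup E] [InnerProductSpace ℝ E]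

variable {T : Set E} (ξa : E)

/-- the pointwise sup -/
def fs (ξa : E) (T : Set E) (r : ℝ) : ℝ :=
  ⨆ x : ↥(T ∩ closedBall 0 r), (inner ℝ ξa (x : E) : ℝ)

lemma mem_S {r : ℝ} (h0 : (0:E) ∈ T) (hr : 0 ≤ r) : (0:E) ∈ T ∩ closedBall 0 r :=
  ⟨h0, by simpa using hr⟩

lemma nonempty_S {r : ℝ} (h0 : (0:E) ∈ T) (hr : 0 ≤ r) :
    Nonempty ↥(T ∩ closedBall 0 r) := ⟨⟨0, mem_S h0 hr⟩⟩

lemma bddAbove_S (r : ℝ) :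
    BddAbove (Set.range fun x : ↥(T ∩ closedBall 0 r) => (inner ℝ ξa (x : E) : ℝ)) := by
  refine ⟨‖ξa‖ * r, ?_⟩
  rintro y ⟨x, rfl⟩
  have hx : ‖(x : E)‖ ≤ r := by
    have := x.2.2
    simpa [mem_closedBall, dist_zero_right] using this
  calc (inner ℝ ξa (x:E) : ℝ) ≤ ‖ξa‖ * ‖(x:E)‖ := real_inner_le_norm _ _
    _ ≤ ‖ξa‖ * r := by gcongr
    _ = ‖ξa‖ * r := rfl

lemma fs_nonneg {r : ℝ} (h0 : (0:E) ∈ T) (hr : 0 ≤ r) : 0 ≤ fs ξa T r := by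
  have := nonempty_S h0 hr
  have h := le_ciSup (bddAbove_S ξa r) (⟨0, mem_S h0 hr⟩ : ↥(T ∩ closedBall 0 r))
  simpa [fs, inner_zero_right] using h

lemma fs_le (r : ℝ) (h0 : (0:E) ∈ T) {c : ℝ}
    (h : ∀ x : E, x ∈ T ∩ closedBall 0 r → (inner ℝ ξa x : ℝ) ≤ c) (hc : 0 ≤ c) :
    fs ξa T r ≤ c := by
  rcases isEmpty_or_nonempty ↥(T ∩ closedBall 0 r) with he | hne
  · simpa [fs, Real.iSup_of_isEmpty] using hc
  · exact ciSup_le fun x => h x x.2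

lemma le_fs {r : ℝ} {x : E} (hx : x ∈ T ∩ closedBall 0 r) :
    (inner ℝ ξa x : ℝ) ≤ fs ξa T r :=
  le_ciSup (bddAbove_S ξa r) (⟨x, hx⟩ : ↥(T ∩ closedBall 0 r))

lemma fs_mono (h0 : (0:E) ∈ T) {r r' : ℝ} (hr : 0 ≤ r) (hrr : r ≤ r') :
    fs ξa T r ≤ fs ξa T r' := by
  refine fs_le ξa r h0 (fun x hx => le_fs ξa ⟨hx.1, ?_⟩) (fs_nonneg ξa h0 (hr.trans hrr))
  exact closedBall_subset_closedBall hrr hx.2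

/-- scaling down: for `0 < r ≤ r'`, `(r/r') * fs r' ≤ fs r`. -/
lemma scale_le_fs (hconv : Convex ℝ T) (h0 : (0:E) ∈ T) {r r' : ℝ}
    (hr : 0 < r) (hrr : r ≤ r') :
    (r / r') * fs ξa T r' ≤ fs ξa T r := by
  have hr' : 0 < r' := hr.trans_le hrr
  have hq0 : 0 ≤ r / r' := by positivity
  have hq1 : r / r' ≤ 1 := by rw [div_le_one hr']; exact hrr
  have : Nonempty ↥(T ∩ closedBall 0 r') := nonempty_S h0 hr'.le
  rw [show fs ξa T r' = ⨆ x : ↥(T ∩ closedBall 0 r'), (inner ℝ ξa (x : E) : ℝ) from rfl,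
    Real.mul_iSup_of_nonneg hq0]
  refine ciSup_le fun x => ?_
  have hmem : (r / r') • (x : E) ∈ T ∩ closedBall 0 r := by
    constructor
    · have := hconv.smul_mem_of_zero_mem h0 x.2.1 ⟨hq0, hq1⟩
      simpa using this
    · have hx : ‖(x : E)‖ ≤ r' := by
        simpa [mem_closedBall, dist_zero_right] using x.2.2
      simp only [mem_closedBall, dist_zero_right, norm_smul, Real.norm_eq_abs,
        abs_of_nonneg hq0]
      calc r / r' * ‖(x:E)‖ ≤ r / r' * r' := by gcongr
        _ = r := div_mul_cancel₀ r hr'.ne'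
  have := le_fs ξa hmem
  simpa [real_inner_smul_right] using this

/-- scaling up: for `0 < r ≤ r'`, `fs r' ≤ (r'/r) * fs r`. -/
lemma fs_le_scale (hconv : Convex ℝ T) (h0 : (0:E) ∈ T) {r r' : ℝ}
    (hr : 0 < r) (hrr : r ≤ r') :
    fs ξa T r' ≤ (r' / r) * fs ξa T r := by
  have h := scale_le_fs ξa hconv h0 hr hrr
  have hr' : 0 < r' := hr.trans_le hrr
  have e : (r'/r) * (r/r') = 1 := by field_simp
  calc fs ξa T r' = ((r'/r) * (r/r')) * fs ξa T r' := by rw [e, one_mul]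
    _ = (r'/r) * ((r/r') * fs ξa T r') := by ring
    _ ≤ (r'/r) * fs ξa T r := by
        exact mul_le_mul_of_nonneg_left h (by positivity)

lemma ciSup_add_ciSup_le {ι κ : Sort*} [Nonempty ι] [Nonempty κ] {f : ι → ℝ} {g : κ → ℝ}
    {c : ℝ} (h : ∀ i j, f i + g j ≤ c) : (⨆ i, f i) + (⨆ j, g j) ≤ c := by
  have h1 : ∀ j, (⨆ i, f i) ≤ c - g j := fun j => ciSup_le fun i => by linarith [h i j]
  have h2 : (⨆ j, g j) ≤ c - ⨆ i, f i := ciSup_le fun j => by linarith [h1 j]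
  linarith

/-- pointwise concavity -/
lemma fs_concave (hconv : Convex ℝ T) (h0 : (0:E) ∈ T) {a b r₁ r₂ : ℝ}
    (ha : 0 ≤ a) (hb : 0 ≤ b) (hab : a + b = 1) (h1 : 0 ≤ r₁) (h2 : 0 ≤ r₂) :
    a * fs ξa T r₁ + b * fs ξa T r₂ ≤ fs ξa T (a * r₁ + b * r₂) := by
  have hm : 0 ≤ a * r₁ + b * r₂ := by positivity
  have n1 : Nonempty ↥(T ∩ closedBall 0 r₁) := nonempty_S h0 h1
  have n2 : Nonempty ↥(T ∩ closedBall 0 r₂) := nonempty_S h0 h2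
  rw [fs, fs, Real.mul_iSup_of_nonneg ha, Real.mul_iSup_of_nonneg hb]
  refine ciSup_add_ciSup_le fun x y => ?_
  have hmem : a • (x : E) + b • (y : E) ∈ T ∩ closedBall 0 (a * r₁ + b * r₂) := by
    constructor
    · exact hconv x.2.1 y.2.1 ha hb hab
    · have hx : ‖(x : E)‖ ≤ r₁ := by simpa [mem_closedBall, dist_zero_right] using x.2.2
      have hy : ‖(y : E)‖ ≤ r₂ := by simpa [mem_closedBall, dist_zero_right] using y.2.2
      simp only [mem_closedBall, dist_zero_right]
      calc ‖a • (x:E) + b • (y:E)‖ ≤ ‖a • (x:E)‖ + ‖b • (y:E)‖ := norm_add_le _ _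
        _ = a * ‖(x:E)‖ + b * ‖(y:E)‖ := by
            simp [norm_smul, abs_of_nonneg ha, abs_of_nonneg hb]
        _ ≤ a * r₁ + b * r₂ := by gcongr
  have := le_fs ξa hmem
  simpa [inner_add_right, real_inner_smul_right] using this


lemma fs_le_norm {r : ℝ} (h0 : (0:E) ∈ T) (hr : 0 ≤ r) : fs ξa T r ≤ ‖ξa‖ * r := by
  refine fs_le ξa r h0 (fun x hx => ?_) (by positivity)
  have hx' : ‖x‖ ≤ r := by simpa [mem_closedBall, dist_zero_right] using hx.2
  calc (inner ℝ ξa x : ℝ) ≤ ‖ξa‖ * ‖x‖ := real_inner_le_norm _ _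
    _ ≤ ‖ξa‖ * r := by gcongr

section Meas

variable [MeasurableSpace E] [OpensMeasurableSpace E] [SecondCountableTopology E]
variable {Ω : Type*} [MeasurableSpace Ω] {ξ : Ω → E}

lemma measurable_fse (hξ : Measurable ξ) (h0 : (0:E) ∈ T) {r : ℝ} (hr : 0 ≤ r) :
    Measurable (fun a => ENNReal.ofReal (fs (ξ a) T r)) := by
  haveI : Nonempty ↥(T ∩ closedBall 0 r) := nonempty_S h0 hr
  obtain ⟨D, hDc, hDd⟩ := TopologicalSpace.exists_countable_dense ↥(T ∩ closedBall 0 r)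
  haveI : Countable ↥D := hDc.to_subtype
  haveI : Nonempty ↥D := hDd.nonempty.to_subtype
  have key : ∀ v : E, ENNReal.ofReal (fs v T r)
      = ⨆ x : ↥D, ENNReal.ofReal (inner ℝ v (((x : ↥(T ∩ closedBall 0 r))) : E)) := by
    intro v
    have hA : ENNReal.ofReal (fs v T r)
        = ⨆ x : ↥(T ∩ closedBall 0 r), ENNReal.ofReal (inner ℝ v (x : E)) := by
      refine Monotone.map_ciSup_of_continuousAt ?_ ?_ (bddAbove_S v r)
      · exact ENNReal.continuous_ofReal.continuousAt
      · exact fun _ _ h => ENNReal.ofReal_le_ofReal h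
    rw [hA]
    set g : ↥(T ∩ closedBall 0 r) → ℝ≥0∞ :=
      fun x => ENNReal.ofReal (inner ℝ v (x : E)) with hg
    have hgc : Continuous g := by
      apply ENNReal.continuous_ofReal.comp
      have : Continuous fun x : E => (inner ℝ v x : ℝ) := continuous_const.inner continuous_id
      exact this.comp continuous_subtype_val
    refine le_antisymm (iSup_le fun x => ?_) (iSup_le fun dd => le_iSup g (dd : _))
    · have hxc : (x : ↥(T ∩ closedBall 0 r)) ∈ closure D := hDd _
      have h1 : g x ∈ closure (g '' D) :=
        mem_closure_image (hgc.continuousAt (x := x)) hxc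
      have h2 : g '' D ⊆ Iic (⨆ y : ↥D, g y) := by
        rintro _ ⟨y, hy, rfl⟩
        exact le_iSup (fun y : ↥D => g (y : _)) ⟨y, hy⟩
      have := closure_minimal h2 isClosed_Iic h1
      exact this
  simp only [key]
  refine Measurable.iSup fun x => ?_
  have hc : Continuous fun v : E =>
      ENNReal.ofReal (inner ℝ v (((x : ↥(T ∩ closedBall 0 r))) : E)) :=
    ENNReal.continuous_ofReal.comp (continuous_id.inner continuous_const)
  exact hc.measurable.comp hξ

/-- the expected sup in `ℝ≥0∞`. -/
def LL (P : Measure Ω) (ξ : Ω → E) (T : Set E) (r : ℝ) : ℝ≥0∞ :=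
  ∫⁻ a, ENNReal.ofReal (fs (ξ a) T r) ∂P

variable (P : Measure Ω)

lemma LL_zero (h0 : (0:E) ∈ T) : LL P ξ T 0 = 0 := by
  have : ∀ a, ENNReal.ofReal (fs (ξ a) T 0) = 0 := by
    intro a
    have h1 : fs (ξ a) T 0 ≤ 0 := by simpa using fs_le_norm (ξ a) h0 le_rfl
    simpa using ENNReal.ofReal_le_ofReal h1
  simp [LL, this]

lemma LL_mono (h0 : (0:E) ∈ T) {r r' : ℝ} (hr : 0 ≤ r) (hrr : r ≤ r') :
    LL P ξ T r ≤ LL P ξ T r' :=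
  lintegral_mono fun a => ENNReal.ofReal_le_ofReal (fs_mono (ξ a) h0 hr hrr)

lemma LL_scale (hconv : Convex ℝ T) (h0 : (0:E) ∈ T) {r r' : ℝ}
    (hr : 0 < r) (hrr : r ≤ r') :
    LL P ξ T r' ≤ ENNReal.ofReal (r' / r) * LL P ξ T r := by
  have h : ∀ a, ENNReal.ofReal (fs (ξ a) T r')
      ≤ ENNReal.ofReal (r' / r) * ENNReal.ofReal (fs (ξ a) T r) := by
    intro a
    rw [← ENNReal.ofReal_mul (div_nonneg (hr.trans_le hrr).le hr.le)]
    exact ENNReal.ofReal_le_ofReal (fs_le_scale (ξ a) hconv h0 hr hrr)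
  calc LL P ξ T r' ≤ ∫⁻ a, ENNReal.ofReal (r' / r) * ENNReal.ofReal (fs (ξ a) T r) ∂P :=
        lintegral_mono h
    _ = ENNReal.ofReal (r' / r) * LL P ξ T r :=
        lintegral_const_mul' _ _ ENNReal.ofReal_ne_top

lemma LL_concave (hconv : Convex ℝ T) (h0 : (0:E) ∈ T) {a b r₁ r₂ : ℝ}
    (ha : 0 ≤ a) (hb : 0 ≤ b) (hab : a + b = 1) (h1 : 0 ≤ r₁) (h2 : 0 ≤ r₂) :
    ENNReal.ofReal a * LL P ξ T r₁ + ENNReal.ofReal b * LL P ξ T r₂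
      ≤ LL P ξ T (a * r₁ + b * r₂) := by
  rw [LL, LL, ← lintegral_const_mul' _ _ ENNReal.ofReal_ne_top,
    ← lintegral_const_mul' _ _ ENNReal.ofReal_ne_top]
  refine le_trans (le_lintegral_add _ _) (lintegral_mono fun x => ?_)
  rw [← ENNReal.ofReal_mul ha, ← ENNReal.ofReal_mul hb,
    ← ENNReal.ofReal_add (mul_nonneg ha (fs_nonneg (ξ x) h0 h1))
      (mul_nonneg hb (fs_nonneg (ξ x) h0 h2))]
  exact ENNReal.ofReal_le_ofReal (fs_concave (ξ x) hconv h0 ha hb hab h1 h2)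

lemma LL_iInf_zero (hξ : Measurable ξ) (hconv : Convex ℝ T) (h0 : (0:E) ∈ T)
    {r₀ : ℝ} (hr₀ : 0 < r₀) (hfin : LL P ξ T r₀ ≠ ⊤) :
    ⨅ n : ℕ, LL P ξ T (r₀ / (n + 1)) = 0 := by
  have hpos : ∀ n : ℕ, 0 < r₀ / (n + 1 : ℝ) := fun n => by positivity
  have hmeas : ∀ n : ℕ, Measurable fun a => ENNReal.ofReal (fs (ξ a) T (r₀ / (n + 1))) :=
    fun n => measurable_fse hξ h0 (hpos n).le
  have hanti : Antitone fun (n : ℕ) (a : Ω) => ENNReal.ofReal (fs (ξ a) T (r₀ / (n + 1))) := by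
    intro m n hmn
    intro a
    refine ENNReal.ofReal_le_ofReal (fs_mono (ξ a) h0 (hpos n).le ?_)
    apply div_le_div_of_nonneg_left hr₀.le (by positivity)
    exact add_le_add_left (Nat.cast_le.2 hmn) 1
  have hfin0 : (∫⁻ a, ENNReal.ofReal (fs (ξ a) T (r₀ / (((0:ℕ):ℝ) + 1))) ∂P) ≠ ⊤ := by
    simpa [LL] using hfin
  have := lintegral_iInf hmeas hanti hfin0
  have hptw : ∀ a, ⨅ n : ℕ, ENNReal.ofReal (fs (ξ a) T (r₀ / (n + 1))) = 0 := by
    intro a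
    have hub : ∀ n : ℕ, ENNReal.ofReal (fs (ξ a) T (r₀ / (n + 1)))
        ≤ ENNReal.ofReal (‖ξ a‖ * (r₀ / (n + 1))) :=
      fun n => ENNReal.ofReal_le_ofReal (fs_le_norm (ξ a) h0 (hpos n).le)
    have hlim : Filter.Tendsto (fun n : ℕ => ENNReal.ofReal (‖ξ a‖ * (r₀ / (n + 1))))
        Filter.atTop (nhds 0) := by
      rw [show (0 : ℝ≥0∞) = ENNReal.ofReal (‖ξ a‖ * 0) by simp]
      refine (ENNReal.continuous_ofReal.tendsto _).comp ?_
      exact (tendsto_const_nhds.mul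
        (tendsto_const_nhds.div_atTop (Filter.tendsto_atTop_add_const_right _ 1
          tendsto_natCast_atTop_atTop)))
    have htend : Filter.Tendsto (fun n : ℕ => ENNReal.ofReal (fs (ξ a) T (r₀ / (n + 1))))
        Filter.atTop (nhds 0) := by
      refine tendsto_of_tendsto_of_tendsto_of_le_of_le tendsto_const_nhds hlim
        (fun n => zero_le) hub
    have h2 := tendsto_atTop_iInf (fun m n h => hanti h a)
    exact tendsto_nhds_unique h2 htend
  simp only [LL]
  rw [← this]
  simp only [hptw]
  simp


/-- the real-valued expected sup -/
def Wr (P : Measure Ω) (ξ : Ω → E) (T : Set E) (r : ℝ) : ℝ := (LL P ξ T r).toReal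

variable {P}

section Fin

variable (hξ : Measurable ξ) (hconv : Convex ℝ T) (h0 : (0:E) ∈ T)
  {r₀ : ℝ} (hr₀ : 0 < r₀) (hfin : LL P ξ T r₀ ≠ ⊤)

include hconv h0 hr₀ hfin

lemma LL_fin_all {r : ℝ} (hr : 0 ≤ r) : LL P ξ T r ≠ ⊤ := by
  rcases le_or_gt r r₀ with h | h
  · exact ne_top_of_le_ne_top hfin (LL_mono P h0 hr h)
  · have hs := LL_scale (ξ := ξ) P hconv h0 hr₀ h.le
    exact ne_top_of_le_ne_top (ENNReal.mul_ne_top ENNReal.ofReal_ne_top hfin) hs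

lemma Wr_zero : Wr P ξ T 0 = 0 := by simp [Wr, LL_zero P h0]

lemma Wr_nonneg (r : ℝ) : 0 ≤ Wr P ξ T r := ENNReal.toReal_nonneg

lemma Wr_mono {r r' : ℝ} (hr : 0 ≤ r) (hrr : r ≤ r') : Wr P ξ T r ≤ Wr P ξ T r' :=
  ENNReal.toReal_mono (LL_fin_all hconv h0 hr₀ hfin (hr.trans hrr)) (LL_mono P h0 hr hrr)

lemma Wr_scale {r r' : ℝ} (hr : 0 < r) (hrr : r ≤ r') :
    Wr P ξ T r' ≤ (r' / r) * Wr P ξ T r := by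
  have h := LL_scale (ξ := ξ) P hconv h0 hr hrr
  have := ENNReal.toReal_mono
    (ENNReal.mul_ne_top ENNReal.ofReal_ne_top (LL_fin_all hconv h0 hr₀ hfin hr.le)) h
  rwa [ENNReal.toReal_mul, ENNReal.toReal_ofReal (div_nonneg (hr.trans_le hrr).le hr.le)] at this

lemma Wr_concave : ConcaveOn ℝ (Ici 0) (Wr P ξ T) := by
  refine ⟨convex_Ici 0, fun x hx y hy a b ha hb hab => ?_⟩
  simp only [smul_eq_mul]
  have h := LL_concave (ξ := ξ) P hconv h0 ha hb hab hx hy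
  have hm : (0:ℝ) ≤ a * x + b * y := by
    have : (0:ℝ) ≤ x := hx
    have : (0:ℝ) ≤ y := hy
    positivity
  have h2 := ENNReal.toReal_mono (LL_fin_all hconv h0 hr₀ hfin hm) h
  rwa [ENNReal.toReal_add
      (ENNReal.mul_ne_top ENNReal.ofReal_ne_top (LL_fin_all hconv h0 hr₀ hfin hx))
      (ENNReal.mul_ne_top ENNReal.ofReal_ne_top (LL_fin_all hconv h0 hr₀ hfin hy)),
    ENNReal.toReal_mul, ENNReal.toReal_mul, ENNReal.toReal_ofReal ha,
    ENNReal.toReal_ofReal hb] at h2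

include hξ

lemma Wr_cont0 : ∀ ε > 0, ∃ δ > 0, ∀ r : ℝ, 0 ≤ r → r < δ → Wr P ξ T r < ε := by
  intro ε hε
  have hinf := LL_iInf_zero P hξ hconv h0 hr₀ hfin
  have : (⨅ n : ℕ, LL P ξ T (r₀ / (n + 1))) < ENNReal.ofReal ε := by
    rw [hinf]; exact ENNReal.ofReal_pos.2 hε
  rw [iInf_lt_iff] at this
  obtain ⟨n, hn⟩ := this
  refine ⟨r₀ / (n + 1), by positivity, fun r hr hrδ => ?_⟩
  have h1 : LL P ξ T r ≤ LL P ξ T (r₀ / (n + 1)) := LL_mono P h0 hr hrδ.le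
  have h2 : LL P ξ T r < ENNReal.ofReal ε := lt_of_le_of_lt h1 hn
  have := ENNReal.toReal_mono ENNReal.ofReal_ne_top h2.le
  rw [ENNReal.toReal_ofReal hε.le] at this
  rcases lt_or_eq_of_le this with h | h
  · exact h
  · -- equality case: show strict anyway via `toReal` strict mono
    have hfr : LL P ξ T r ≠ ⊤ := LL_fin_all hconv h0 hr₀ hfin hr
    have := (ENNReal.toReal_lt_toReal hfr ENNReal.ofReal_ne_top).2 h2
    rwa [ENNReal.toReal_ofReal hε.le] at this

lemma Wr_continuousOn : ContinuousOn (Wr P ξ T) (Ici 0) := by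
  have hIoi : ContinuousOn (Wr P ξ T) (Ioi 0) := by
    have h := (Wr_concave hconv h0 hr₀ hfin (ξ := ξ)).continuousOn_interior
    rwa [interior_Ici] at h
  intro x hx
  rcases eq_or_lt_of_le (mem_Ici.1 hx) with rfl | hxpos
  · rw [Metric.continuousWithinAt_iff]
    intro ε hε
    obtain ⟨δ, hδ, hδ'⟩ := Wr_cont0 hξ hconv h0 hr₀ hfin ε hε
    refine ⟨δ, hδ, fun r hr hrδ => ?_⟩
    rw [Real.dist_eq] at hrδ ⊢
    rw [Wr_zero h0 (hconv := hconv) (hr₀ := hr₀) (hfin := hfin)]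
    have h1 : 0 ≤ Wr P ξ T r := Wr_nonneg hconv h0 hr₀ hfin r
    have h2 : Wr P ξ T r < ε := hδ' r hr (by rw [abs_of_nonneg (by simpa using hr), sub_zero] at hrδ; exact hrδ)
    rw [abs_of_nonneg (by linarith)]
    linarith
  · exact ((hIoi x hxpos).mono_of_mem_nhdsWithin (mem_nhdsWithin_of_mem_nhds (Ioi_mem_nhds hxpos)))


lemma exists_unique_max [FiniteDimensional ℝ E] {σ : ℝ} (hσ : 0 < σ) :
    ∃! r : ℝ, 0 ≤ r ∧ ∀ r' : ℝ, 0 ≤ r' →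
      Wr P ξ T r' - r' ^ 2 / (2 * σ) ≤ Wr P ξ T r - r ^ 2 / (2 * σ) := by
  set g : ℝ → ℝ := fun r => Wr P ξ T r - r ^ 2 / (2 * σ) with hg
  have h2σ : (0:ℝ) < 2 * σ := by linarith
  have hW0 : Wr P ξ T 0 = 0 := Wr_zero hconv h0 hr₀ hfin
  have hg0 : g 0 = 0 := by simp [hg, hW0]
  have hgcont : ContinuousOn g (Ici 0) :=
    (Wr_continuousOn hξ hconv h0 hr₀ hfin).sub
      ((continuous_pow 2).div_const (2*σ)).continuousOn
  have hsc : StrictConcaveOn ℝ (Ici 0) g := by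
    refine ⟨convex_Ici 0, fun x hx y hy hxy a b ha hb hab => ?_⟩
    have h1 := (Wr_concave hconv h0 hr₀ hfin (ξ := ξ)).2 hx hy ha.le hb.le hab
    have h2 := (strictConvexOn_pow (le_refl 2)).2 hx hy hxy ha hb hab
    simp only [smul_eq_mul] at h1 h2 ⊢
    have h3 : (a*x+b*y)^2 / (2*σ) < (a*x^2+b*y^2) / (2*σ) := (div_lt_div_iff_of_pos_right h2σ).2 h2
    have h4 : (a*x^2+b*y^2) / (2*σ) = a*(x^2/(2*σ)) + b*(y^2/(2*σ)) := by ring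
    simp only [hg]
    have h5 : a*(x^2/(2*σ)) + b*(y^2/(2*σ)) = (a*x^2+b*y^2) / (2*σ) := by ring
    nlinarith [h1, h3]
  have hc : 0 ≤ Wr P ξ T 1 := Wr_nonneg hconv h0 hr₀ hfin 1
  set c : ℝ := Wr P ξ T 1 with hcdef
  have hlin : ∀ r : ℝ, 1 ≤ r → Wr P ξ T r ≤ r * c := by
    intro r hr1
    have := Wr_scale hconv h0 hr₀ hfin one_pos hr1
    simpa using this
  set R : ℝ := max 1 (2*σ*c + 1) with hRdef
  have hR1 : (1:ℝ) ≤ R := le_max_left _ _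
  have hRc : 2*σ*c + 1 ≤ R := le_max_right _ _
  have hR0 : (0:ℝ) ≤ R := by linarith
  have hneg : ∀ r : ℝ, R < r → g r < 0 := by
    intro r hr
    have hr1 : (1:ℝ) ≤ r := by linarith
    have hW := hlin r hr1
    have hkey : Wr P ξ T r < r ^ 2 / (2*σ) := by
      rw [lt_div_iff₀ h2σ]
      have h5 : r * (2*σ*c) ≤ r * (r-1) := mul_le_mul_of_nonneg_left (by linarith) (by linarith)
      have h6 : Wr P ξ T r * (2*σ) ≤ (r*c)*(2*σ) := mul_le_mul_of_nonneg_right hW h2σ.le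
      have h7 : (r*c)*(2*σ) = r * (2*σ*c) := by ring
      have h8 : r*(r-1) = r^2 - r := by ring
      linarith
    simp only [hg, sub_neg]
    exact hkey
  obtain ⟨rs, hrs_mem, hrs⟩ := (isCompact_Icc (a := (0:ℝ)) (b := R)).exists_isMaxOn
    ⟨0, left_mem_Icc.2 hR0⟩ (hgcont.mono Icc_subset_Ici_self)
  have hglobal : ∀ r : ℝ, 0 ≤ r → g r ≤ g rs := by
    intro r hr
    rcases le_or_gt r R with h | h
    · exact hrs ⟨hr, h⟩
    · have := hneg r h
      have h0' : g 0 ≤ g rs := hrs (left_mem_Icc.2 hR0)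
      have h0'' : (0:ℝ) ≤ g rs := by rw [← hg0]; exact h0'
      linarith
  refine ⟨rs, ⟨hrs_mem.1, fun r' hr' => hglobal r' hr'⟩, ?_⟩
  rintro y ⟨hy0, hy⟩
  by_contra hne
  have heq : g y = g rs := le_antisymm (hglobal y hy0) (hy rs hrs_mem.1)
  have hmid := hsc.2 (hy0 : y ∈ Ici 0) (hrs_mem.1 : rs ∈ Ici 0) hne one_half_pos one_half_pos
    (by norm_num)
  simp only [smul_eq_mul] at hmid
  have hmem : (0:ℝ) ≤ 1/2 * y + 1/2 * rs := by
    have h1 : (0:ℝ) ≤ y := hy0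
    have h2 : (0:ℝ) ≤ rs := hrs_mem.1
    linarith
  have := hglobal _ hmem
  rw [heq] at hmid
  have : (1:ℝ)/2 * g rs + 1/2 * g rs = g rs := by ring
  linarith [hglobal _ hmem, hmid]

end Fin

end Meas

end Stmt0

open Stmt0

/-- For a convex set `T ⊆ ℝ^d` containing the origin and a random vector `ξ`,
with `ω(r) = E[sup_{x ∈ T ∩ rB₂} ⟨ξ, x⟩]`, the following are equivalent:
(i) for every `σ > 0` the maximizer of `r ↦ ω(r) − r²/(2σ)` over `r ≥ 0` exists and is unique;
(ii) there exists `r₀ > 0` with `ω(r₀) ∈ [0, ∞)`;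
(iii) for every `r > 0`, `ω(r) ∈ [0, ∞)`. -/
theorem statement0 {d : ℕ} {Ω : Type*} [MeasurableSpace Ω]
    (P : Measure Ω) [IsProbabilityMeasure P]
    (ξ : Ω → EuclideanSpace ℝ (Fin d)) (hξ : Measurable ξ)
    (T : Set (EuclideanSpace ℝ (Fin d))) (hconv : Convex ℝ T)
    (h0 : (0 : EuclideanSpace ℝ (Fin d)) ∈ T)
    (w : ℝ → EReal)
    (hw : ∀ r : ℝ, w r =
      ((∫⁻ a, ENNReal.ofReal
          (⨆ x : ↥(T ∩ closedBall 0 r), (inner ℝ (ξ a) (x : EuclideanSpace ℝ (Fin d)) : ℝ)) ∂P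
        : ℝ≥0∞) : EReal)) :
    ((∀ σ : ℝ, 0 < σ → ∃! r : ℝ, 0 ≤ r ∧ ∀ r' : ℝ, 0 ≤ r' →
        w r' - ((r' ^ 2 / (2 * σ) : ℝ) : EReal) ≤ w r - ((r ^ 2 / (2 * σ) : ℝ) : EReal)) ↔
      (∃ r₀ : ℝ, 0 < r₀ ∧ 0 ≤ w r₀ ∧ w r₀ < ⊤)) ∧
    ((∃ r₀ : ℝ, 0 < r₀ ∧ 0 ≤ w r₀ ∧ w r₀ < ⊤) ↔
      (∀ r : ℝ, 0 < r → 0 ≤ w r ∧ w r < ⊤)) := by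
  have hLw : ∀ r : ℝ, w r = ((LL P ξ T r : ℝ≥0∞) : EReal) := fun r => by
    rw [hw r]; rfl
  have hpos : ∀ r : ℝ, (0:EReal) ≤ w r := fun r => by
    rw [hLw]; exact EReal.coe_ennreal_nonneg _
  have hlt : ∀ r : ℝ, (w r < ⊤ ↔ LL P ξ T r ≠ ⊤) := by
    intro r
    rw [hLw]
    constructor
    · intro h hT
      rw [hT] at h
      simp [EReal.coe_ennreal_top] at h
    · intro h
      rw [← ENNReal.ofReal_toReal h, EReal.coe_ennreal_ofReal]
      exact EReal.coe_lt_top _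
  constructor
  · constructor
    · intro hi
      by_contra hii
      push_neg at hii
      have hall : ∀ r : ℝ, 0 < r → w r = ⊤ := by
        intro r hr
        have h1 := hii r hr (hpos r)
        exact top_le_iff.1 ((not_lt.1 (fun hc => absurd ((hlt r).1 hc) (by
          intro hne
          exact absurd ((hlt r).2 hne) (by simpa using h1.not_gt)))) )
      obtain ⟨rh, -, huniq⟩ := hi 1 one_pos
      have hPred : ∀ s : ℝ, 0 < s → (0 ≤ s ∧ ∀ r' : ℝ, 0 ≤ r' →
          w r' - ((r' ^ 2 / (2 * 1) : ℝ) : EReal) ≤ w s - ((s ^ 2 / (2 * 1) : ℝ) : EReal)) := by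
        intro s hs
        refine ⟨hs.le, fun r' hr' => ?_⟩
        rw [hall s hs, EReal.top_sub_coe]
        exact le_top
      have h1 := huniq 1 (hPred 1 one_pos)
      have h2 := huniq 2 (hPred 2 two_pos)
      have : (1:ℝ) = 2 := h1.trans h2.symm
      norm_num at this
    · rintro ⟨r₀, hr₀, -, hfin'⟩ σ hσ
      have hfin : LL P ξ T r₀ ≠ ⊤ := (hlt r₀).1 hfin'
      have hco : ∀ r : ℝ, 0 ≤ r → w r = ((Wr P ξ T r : ℝ) : EReal) := by
        intro r hr
        rw [hLw, ← ENNReal.ofReal_toReal (LL_fin_all hconv h0 hr₀ hfin hr),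
          EReal.coe_ennreal_ofReal, max_eq_left ENNReal.toReal_nonneg]
        rfl
      have key : ∀ r r' : ℝ, 0 ≤ r → 0 ≤ r' →
          ((w r' - ((r' ^ 2 / (2 * σ) : ℝ) : EReal) ≤ w r - ((r ^ 2 / (2 * σ) : ℝ) : EReal)) ↔
            (Wr P ξ T r' - r' ^ 2 / (2 * σ) ≤ Wr P ξ T r - r ^ 2 / (2 * σ))) := by
        intro r r' hr hr'
        rw [hco r hr, hco r' hr', ← EReal.coe_sub, ← EReal.coe_sub, EReal.coe_le_coe_iff]
      have hiff : ∀ r : ℝ,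
          ((0 ≤ r ∧ ∀ r' : ℝ, 0 ≤ r' →
            w r' - ((r' ^ 2 / (2 * σ) : ℝ) : EReal) ≤ w r - ((r ^ 2 / (2 * σ) : ℝ) : EReal)) ↔
          (0 ≤ r ∧ ∀ r' : ℝ, 0 ≤ r' →
            Wr P ξ T r' - r' ^ 2 / (2 * σ) ≤ Wr P ξ T r - r ^ 2 / (2 * σ))) := by
        intro r
        constructor
        · rintro ⟨hr, h⟩
          exact ⟨hr, fun r' hr' => (key r r' hr hr').1 (h r' hr')⟩
        · rintro ⟨hr, h⟩
          exact ⟨hr, fun r' hr' => (key r r' hr hr').2 (h r' hr')⟩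
      obtain ⟨rs, hrs, hu⟩ := exists_unique_max hξ hconv h0 hr₀ hfin (σ := σ) hσ
      exact ⟨rs, (hiff rs).2 hrs, fun y hy => hu y ((hiff y).1 hy)⟩
  · constructor
    · rintro ⟨r₀, hr₀, -, hfin'⟩ r hr
      exact ⟨hpos r, (hlt r).2 (LL_fin_all hconv h0 hr₀ ((hlt r₀).1 hfin') hr.le)⟩
    · intro h
      exact ⟨1, one_pos, hpos 1, (h 1 one_pos).2⟩
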